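/- arXiv:1404.2355 — 3 statements merged into one kernel-verified Lean document; each statement's English description precedes it below -/
import Mathlib

section
/- For any n×p real matrices A and B, the ESDs of AA' and BB' satisfy L⁴(F^{AA'}, F^{BB'}) ≤ 2 n^{-2} (‖A‖₂² + ‖B‖₂²) ‖A − B‖₂², where ‖·‖₂ is the Frobenius norm ‖M‖₂ = tr^{1/2}(M'M). -/
/-!
Let `λ, μ` be the eigenvalues of `A Aᵀ, B Bᵀ` and `s = √λ, t = √μ` the singular values.
For any permutation `σ`, Markov's inequality shows that shifting one ESD by `ε` moves it by at
most `ε` once `∑ₖ |λₖ - μ_{σ k}| ≤ n ε²`, so `L² ≤ n⁻¹ ∑ₖ |λₖ - μ_{σ k}|`. Cauchy–Schwarz gives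
`(∑ₖ |sₖ² - t_{σ k}²|)² ≤ ∑ₖ (sₖ - t_{σ k})² · 2 (‖A‖₂² + ‖B‖₂²)`, and for a suitable `σ` the
Hoffman–Wielandt inequality for singular values bounds `∑ₖ (sₖ - t_{σ k})²` by `‖A - B‖₂²`.

Since `‖A - B‖₂² = ‖A‖₂² + ‖B‖₂² - 2 tr(AᵀB)`, the latter is von Neumann's trace inequality
`tr(AᵀB) ≤ ∑ₖ sₖ t_{σ k}`. Writing `A = U diag(s) X` and `B = V diag(t) Y`, the trace is
`∑ᵢⱼ sᵢ tⱼ Wᵢⱼ Zᵢⱼ` with `W = UᵀV` orthogonal and `Z = X Yᵀ` having rows and columns of norm at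
most one (Bessel). Hence `Wᵢⱼ Zᵢⱼ ≤ (Wᵢⱼ² + Zᵢⱼ²) / 2`, a doubly substochastic matrix, and by
Birkhoff's theorem the bilinear form `∑ᵢⱼ sᵢ tⱼ Dᵢⱼ` over such `D` is maximised at a permutation.
-/

open MeasureTheory ProbabilityTheory Filter Matrix
open scoped NNReal ENNReal

noncomputable section

open scoped Classical in
/-- Empirical spectral distribution `F^S(x) = n⁻¹ #{k : λ_k ≤ x}` of a symmetric
square matrix (junk value `0` if the matrix is not symmetric). -/
def esd {n : ℕ} (S : Matrix (Fin n) (Fin n) ℝ) (x : ℝ) : ℝ :=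
  if hS : S.IsHermitian then
    ((Finset.univ.filter fun k => hS.eigenvalues k ≤ x).card : ℝ) / n
  else 0

/-- Euclidean (Frobenius) norm `‖M‖₂ = tr(MᵀM)^{1/2}` of a real matrix. -/
def frobNorm {n p : ℕ} (M : Matrix (Fin n) (Fin p) ℝ) : ℝ := Real.sqrt ((Mᵀ * M).trace)

/-- Levy distance between two distribution functions on `ℝ`. -/
def levyDist (F G : ℝ → ℝ) : ℝ :=
  sInf {ε : ℝ | 0 < ε ∧ ∀ x : ℝ, F (x - ε) - ε ≤ G x ∧ G x ≤ F (x + ε) + ε}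

open Finset

section Counting

variable {ι : Type*} [Fintype ι]

lemma card_filter_le_abs_mul_le_sum (d : ι → ℝ) (ε : ℝ) :
    (#{k | ε ≤ |d k|} : ℝ) * ε ≤ ∑ k, |d k| := by
  rw [← nsmul_eq_mul]
  calc #{k | ε ≤ |d k|} • ε ≤ ∑ k ∈ {k | ε ≤ |d k|}, |d k| :=
        card_nsmul_le_sum _ _ _ fun k hk => (mem_filter.1 hk).2
    _ ≤ ∑ k, |d k| := sum_le_sum_of_subset_of_nonneg (filter_subset _ _) fun _ _ _ => abs_nonneg _

lemma card_filter_le_card_filter_add (f g : ι → ℝ) {ε : ℝ} (hε : 0 < ε) (y : ℝ) :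
    (#{k | f k ≤ y} : ℝ) ≤ #{k | g k ≤ y + ε} + (∑ k, |f k - g k|) / ε := by
  classical
  have hsub : ({k | f k ≤ y} : Finset ι) ⊆
      ({k | g k ≤ y + ε} : Finset ι) ∪ ({k | ε ≤ |f k - g k|} : Finset ι) := by
    intro k
    simp only [mem_filter, mem_union, mem_univ, true_and]
    intro hk
    by_contra! h
    linarith [h.1, h.2, neg_abs_le (f k - g k)]
  calc (#{k | f k ≤ y} : ℝ) ≤ #{k | g k ≤ y + ε} + #{k | ε ≤ |f k - g k|} := by
        exact_mod_cast (card_le_card hsub).trans (card_union_le _ _)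
    _ ≤ _ := by
        gcongr
        rw [le_div_iff₀ hε]
        exact card_filter_le_abs_mul_le_sum _ _

end Counting

lemma esd_eq_card_div {n : ℕ} {S : Matrix (Fin n) (Fin n) ℝ} (hS : S.IsHermitian) (x : ℝ) :
    esd S x = #{k | hS.eigenvalues k ≤ x} / n := by
  rw [esd, dif_pos hS]

lemma esd_le_esd_add {n : ℕ} (hn : 0 < n) {S T : Matrix (Fin n) (Fin n) ℝ} (hS : S.IsHermitian)
    (hT : T.IsHermitian) (σ : Equiv.Perm (Fin n)) {ε : ℝ} (hε : 0 < ε)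
    (h : ∑ k, |hS.eigenvalues k - hT.eigenvalues (σ k)| ≤ n * ε ^ 2) (y : ℝ) :
    esd S y ≤ esd T (y + ε) + ε := by
  have hn' : (0 : ℝ) < n := by exact_mod_cast hn
  rw [esd_eq_card_div hS, esd_eq_card_div hT, div_add' _ _ _ hn'.ne',
    div_le_div_iff_of_pos_right hn']
  calc (#{k | hS.eigenvalues k ≤ y} : ℝ)
      ≤ #{k | hT.eigenvalues (σ k) ≤ y + ε} +
          (∑ k, |hS.eigenvalues k - hT.eigenvalues (σ k)|) / ε :=
        card_filter_le_card_filter_add _ _ hε y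
    _ ≤ #{k | hT.eigenvalues k ≤ y + ε} + ε * n := by
        rw [card_equiv σ (t := {k | hT.eigenvalues k ≤ y + ε}) (by simp)]
        gcongr
        rw [div_le_iff₀ hε]
        linarith

lemma levyDist_le_of_forall_gt {F G : ℝ → ℝ} {r : ℝ} (hr : 0 ≤ r)
    (h : ∀ ε > r, ∀ x, F (x - ε) - ε ≤ G x ∧ G x ≤ F (x + ε) + ε) : levyDist F G ≤ r :=
  le_of_forall_gt_imp_ge_of_dense fun ε hε =>
    csInf_le ⟨0, fun _ hx => hx.1.le⟩ ⟨hr.trans_lt hε, h ε hε⟩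

lemma levyDist_esd_sq_le {n : ℕ} (hn : 0 < n) {S T : Matrix (Fin n) (Fin n) ℝ}
    (hS : S.IsHermitian) (hT : T.IsHermitian) (σ : Equiv.Perm (Fin n)) :
    levyDist (esd S) (esd T) ^ 2 ≤ (∑ k, |hS.eigenvalues k - hT.eigenvalues (σ k)|) / n := by
  set d := ∑ k, |hS.eigenvalues k - hT.eigenvalues (σ k)|
  have hd : 0 ≤ d / n := by positivity
  have hd_symm : ∑ k, |hT.eigenvalues k - hS.eigenvalues (σ.symm k)| = d := by
    rw [← Equiv.sum_comp σ]
    simp only [Equiv.symm_apply_apply, abs_sub_comm]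
    rfl
  have hL : levyDist (esd S) (esd T) ≤ √(d / n) := by
    refine levyDist_le_of_forall_gt (Real.sqrt_nonneg _) fun ε hε x => ?_
    have hε0 : 0 < ε := (Real.sqrt_nonneg _).trans_lt hε
    have hdε : d ≤ n * ε ^ 2 := by
      have := (Real.sqrt_lt' hε0).1 hε
      rw [div_lt_iff₀ (by exact_mod_cast hn)] at this
      linarith
    constructor
    · simpa using esd_le_esd_add hn hS hT σ hε0 hdε (x - ε)
    · exact esd_le_esd_add hn hT hS σ.symm hε0 (hd_symm.trans_le hdε) x
  calc levyDist (esd S) (esd T) ^ 2 ≤ √(d / n) ^ 2 := by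
        gcongr
        exact Real.sInf_nonneg fun _ hx => hx.1.le
    _ = d / n := Real.sq_sqrt hd

section RowsAndColumns

variable {m k p : Type*} [Fintype k] [Fintype p]

lemma mul_transpose_apply_self (M : Matrix m p ℝ) (i : m) : (M * Mᵀ) i i = ∑ c, M i c ^ 2 := by
  simp only [mul_apply, transpose_apply, sq]

lemma sum_sq_apply_eq_one_of_mul_transpose_eq_one [Fintype m] [DecidableEq m] {W : Matrix m m ℝ}
    (hW : W * Wᵀ = 1) (i : m) : ∑ j, W i j ^ 2 = 1 := by
  rw [← mul_transpose_apply_self, hW, one_apply_eq]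

/-- Bessel's inequality, from `0 ≤ ‖x - Yᵀ Y x‖²` for the rows `x` of `X`. -/
lemma sum_sq_mul_transpose_apply_le [DecidableEq k] (X : Matrix m p ℝ) (Y : Matrix k p ℝ)
    {e : k → ℝ} (hY : Y * Yᵀ = diagonal e) (he : ∀ j, e j ≤ 1) (i : m) :
    ∑ j, (X * Yᵀ) i j ^ 2 ≤ (X * Xᵀ) i i := by
  set Z := X * Yᵀ with hZ
  have hres :
      (X - Z * Y) * (X - Z * Y)ᵀ = X * Xᵀ - Z * Zᵀ - Z * Zᵀ + Z * (diagonal e * Zᵀ) := by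
    have hZt : Y * Xᵀ = Zᵀ := by rw [hZ, transpose_mul, transpose_transpose]
    rw [transpose_sub, transpose_mul, Matrix.sub_mul, Matrix.mul_sub, Matrix.mul_sub,
      ← Matrix.mul_assoc X, ← hZ, Matrix.mul_assoc Z Y Xᵀ, hZt, Matrix.mul_assoc Z Y,
      ← Matrix.mul_assoc Y, hY]
    abel
  have hnonneg : 0 ≤ ((X - Z * Y) * (X - Z * Y)ᵀ) i i := by
    rw [mul_transpose_apply_self]
    positivity
  have hweighted : (Z * (diagonal e * Zᵀ)) i i ≤ ∑ j, Z i j ^ 2 := by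
    rw [mul_apply]
    simp only [diagonal_mul, transpose_apply]
    refine sum_le_sum fun j _ => ?_
    nlinarith [he j, sq_nonneg (Z i j)]
  rw [hres, Matrix.add_apply, Matrix.sub_apply, Matrix.sub_apply, mul_transpose_apply_self Z]
    at hnonneg
  linarith

end RowsAndColumns

section DoublyStochastic

variable {ι : Type*} [Fintype ι] [DecidableEq ι]

lemma exists_mem_doublyStochastic_ge (D : Matrix ι ι ℝ) (h0 : ∀ i j, 0 ≤ D i j)
    (hrow : ∀ i, ∑ j, D i j ≤ 1) (hcol : ∀ j, ∑ i, D i j ≤ 1) :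
    ∃ D' ∈ doublyStochastic ℝ ι, ∀ i j, D i j ≤ D' i j := by
  set r : ι → ℝ := fun i => 1 - ∑ j, D i j
  set c : ι → ℝ := fun j => 1 - ∑ i, D i j
  have hr : ∀ i, 0 ≤ r i := fun i => sub_nonneg.2 (hrow i)
  have hc : ∀ j, 0 ≤ c j := fun j => sub_nonneg.2 (hcol j)
  set S := ∑ i, r i
  have hS : ∑ j, c j = S := by
    simp only [S, r, c, sum_sub_distrib]
    rw [sum_comm]
  have hr_cancel : ∀ i, r i * S / S = r i := fun i => mul_div_cancel_of_imp fun h =>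
    (sum_eq_zero_iff_of_nonneg fun i _ => hr i).1 h i (mem_univ i)
  have hc_cancel : ∀ j, c j * S / S = c j := fun j => mul_div_cancel_of_imp fun h =>
    (sum_eq_zero_iff_of_nonneg fun j _ => hc j).1 (hS.trans h) j (mem_univ j)
  have hE : ∀ i j, 0 ≤ r i * c j / S := fun i j =>
    div_nonneg (mul_nonneg (hr i) (hc j)) (sum_nonneg fun i _ => hr i)
  -- the deficits `r`, `c` of the row and column sums have the same total `S`, so the rank-one
  -- matrix `r cᵀ / S` fills them in (if `S = 0` then `r = c = 0` and it is `0`)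
  refine ⟨D + of fun i j => r i * c j / S, mem_doublyStochastic_iff_sum.2 ⟨fun i j => ?_,
    fun i => ?_, fun j => ?_⟩, fun i j => ?_⟩
  · exact add_nonneg (h0 i j) (hE i j)
  · calc ∑ j, (D + of fun i j => r i * c j / S) i j = ∑ j, D i j + r i * (∑ j, c j) / S := by
          simp only [Matrix.add_apply, of_apply, sum_add_distrib, mul_sum, sum_div]
      _ = 1 := by rw [hS, hr_cancel, add_sub_cancel]
  · calc ∑ i, (D + of fun i j => r i * c j / S) i j = ∑ i, D i j + c j * S / S := by
          simp only [Matrix.add_apply, of_apply, sum_add_distrib, ← sum_div, ← sum_mul]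
          rw [mul_comm]
      _ = 1 := by rw [hc_cancel, add_sub_cancel]
  · exact le_add_of_nonneg_right (hE i j)

lemma exists_perm_dotProduct_mulVec_le {s t : ι → ℝ} (hs : ∀ i, 0 ≤ s i) (ht : ∀ j, 0 ≤ t j)
    (D : Matrix ι ι ℝ) (h0 : ∀ i j, 0 ≤ D i j) (hrow : ∀ i, ∑ j, D i j ≤ 1)
    (hcol : ∀ j, ∑ i, D i j ≤ 1) :
    ∃ σ : Equiv.Perm ι, s ⬝ᵥ (D *ᵥ t) ≤ s ⬝ᵥ (t ∘ σ) := by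
  obtain ⟨D', hD', hle⟩ := exists_mem_doublyStochastic_ge D h0 hrow hcol
  let f : Matrix ι ι ℝ →ₗ[ℝ] ℝ :=
    { toFun := fun M => s ⬝ᵥ (M *ᵥ t)
      map_add' := fun M N => by simp only [add_mulVec, dotProduct_add]
      map_smul' := fun a M => by simp only [smul_mulVec, dotProduct_smul, RingHom.id_apply] }
  rw [← SetLike.mem_coe, doublyStochastic_eq_convexHull_permMatrix] at hD'
  obtain ⟨_, ⟨σ, rfl⟩, hσ⟩ :=
    (f.convexOn convex_univ).exists_ge_of_mem_convexHull (Set.subset_univ _) hD'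
  refine ⟨σ, ?_⟩
  calc s ⬝ᵥ (D *ᵥ t) ≤ f D' := by
        refine sum_le_sum fun i _ => mul_le_mul_of_nonneg_left ?_ (hs i)
        exact sum_le_sum fun j _ => mul_le_mul_of_nonneg_right (hle i j) (ht j)
    _ ≤ f (σ.permMatrix ℝ) := hσ
    _ = s ⬝ᵥ (t ∘ σ) := congrArg (s ⬝ᵥ ·) (permMatrix_mulVec σ)

lemma exists_perm_sum_mul_le_of_mul_transpose_eq_one {s t : ι → ℝ} (hs : ∀ i, 0 ≤ s i)
    (ht : ∀ j, 0 ≤ t j) {W Z : Matrix ι ι ℝ} (hW : W * Wᵀ = 1)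
    (hrow : ∀ i, ∑ j, Z i j ^ 2 ≤ 1) (hcol : ∀ j, ∑ i, Z i j ^ 2 ≤ 1) :
    ∃ σ : Equiv.Perm ι, ∑ i, ∑ j, s i * W i j * t j * Z i j ≤ ∑ i, s i * t (σ i) := by
  have hWt : Wᵀ * Wᵀᵀ = 1 := by rw [transpose_transpose]; exact mul_eq_one_comm.1 hW
  set D : Matrix ι ι ℝ := of fun i j => (W i j ^ 2 + Z i j ^ 2) / 2
  obtain ⟨σ, hσ⟩ := exists_perm_dotProduct_mulVec_le hs ht D
    (fun i j => by simp only [D, of_apply]; positivity)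
    (fun i => by
      simp only [D, of_apply, ← sum_div, sum_add_distrib,
        sum_sq_apply_eq_one_of_mul_transpose_eq_one hW]
      linarith [hrow i])
    (fun j => by
      have hWcol := sum_sq_apply_eq_one_of_mul_transpose_eq_one hWt j
      simp only [transpose_apply] at hWcol
      simp only [D, of_apply, ← sum_div, sum_add_distrib]
      linarith [hcol j])
  refine ⟨σ, le_trans ?_ hσ⟩
  simp only [dotProduct, mulVec, mul_sum]
  refine sum_le_sum fun i _ => sum_le_sum fun j _ => ?_
  calc s i * W i j * t j * Z i j = s i * t j * (W i j * Z i j) := by ring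
    _ ≤ s i * t j * ((W i j ^ 2 + Z i j ^ 2) / 2) := by
        gcongr
        · exact mul_nonneg (hs i) (ht j)
        · linarith [two_mul_le_add_sq (W i j) (Z i j)]
    _ = s i * (D i j * t j) := by simp only [D, of_apply]; ring

end DoublyStochastic

section SingularValues

variable {m p : Type*} [Fintype m] [DecidableEq m] [Fintype p]

lemma eigenvalues_mul_transpose_self_nonneg {A : Matrix m p ℝ} (hA : (A * Aᵀ).IsHermitian)
    (i : m) : 0 ≤ hA.eigenvalues i :=
  eigenvalues_self_mul_conjTranspose_nonneg A i

lemma exists_orthogonal_conj_mul_transpose_self_eq_diagonal (A : Matrix m p ℝ)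
    (hA : (A * Aᵀ).IsHermitian) :
    ∃ U : Matrix m m ℝ, U * Uᵀ = 1 ∧ (Uᵀ * A) * (Uᵀ * A)ᵀ = diagonal hA.eigenvalues := by
  refine ⟨hA.eigenvectorUnitary, ?_, ?_⟩
  · simpa [star_eq_conjTranspose] using Matrix.mem_unitaryGroup_iff.1 hA.eigenvectorUnitary.2
  · have hd := hA.conjStarAlgAut_star_eigenvectorUnitary
    rw [Unitary.conjStarAlgAut_apply, Unitary.coe_star, star_star, star_eq_conjTranspose,
      conjTranspose_eq_transpose_of_trivial, RCLike.ofReal_real_eq_id, Function.id_comp] at hd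
    rw [transpose_mul, transpose_transpose, ← hd]
    simp only [Matrix.mul_assoc]

/-- A compact singular value decomposition. -/
lemma exists_eq_mul_diagonal_sqrt_eigenvalues_mul (A : Matrix m p ℝ)
    (hA : (A * Aᵀ).IsHermitian) :
    ∃ (U : Matrix m m ℝ) (X : Matrix m p ℝ) (e : m → ℝ), U * Uᵀ = 1 ∧ X * Xᵀ = diagonal e ∧
      (∀ i, e i ≤ 1) ∧ A = U * diagonal (fun i => √(hA.eigenvalues i)) * X := by
  obtain ⟨U, hU, hP⟩ := exists_orthogonal_conj_mul_transpose_self_eq_diagonal A hA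
  set P := Uᵀ * A
  set s : m → ℝ := fun i => √(hA.eigenvalues i)
  have hs : ∀ i, s i ^ 2 = hA.eigenvalues i := fun i =>
    Real.sq_sqrt (eigenvalues_mul_transpose_self_nonneg hA i)
  refine ⟨U, diagonal (fun i => (s i)⁻¹) * P, fun i => (s i)⁻¹ * (hA.eigenvalues i * (s i)⁻¹),
    hU, ?_, fun i => ?_, ?_⟩
  · rw [transpose_mul, diagonal_transpose, Matrix.mul_assoc, ← Matrix.mul_assoc P, hP,
      diagonal_mul_diagonal, diagonal_mul_diagonal]
  · dsimp only
    rw [← hs]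
    rcases eq_or_ne (s i) 0 with h | h
    · simp [h]
    · exact le_of_eq (by field_simp)
  · have hrow : ∀ i c, s i = 0 → P i c = 0 := fun i c h => by
      have hPi : ∑ c, P i c ^ 2 = 0 := by
        rw [← mul_transpose_apply_self, hP, diagonal_apply_eq, ← hs, h, sq, zero_mul]
      exact pow_eq_zero_iff two_ne_zero |>.1 <|
        (sum_eq_zero_iff_of_nonneg fun c _ => sq_nonneg (P i c)).1 hPi c (mem_univ c)
    calc A = U * P := by rw [← Matrix.mul_assoc, hU, Matrix.one_mul]
      _ = _ := by
        rw [Matrix.mul_assoc, ← Matrix.mul_assoc (diagonal s), diagonal_mul_diagonal]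
        congr 1
        ext i c
        rw [diagonal_mul]
        rcases eq_or_ne (s i) 0 with h | h
        · simp [hrow i c h]
        · rw [mul_inv_cancel₀ h, one_mul]

/-- von Neumann's trace inequality. -/
lemma exists_perm_trace_transpose_mul_le (A B : Matrix m p ℝ) (hA : (A * Aᵀ).IsHermitian)
    (hB : (B * Bᵀ).IsHermitian) :
    ∃ σ : Equiv.Perm m,
      (Aᵀ * B).trace ≤ ∑ i, √(hA.eigenvalues i) * √(hB.eigenvalues (σ i)) := by
  obtain ⟨U, X, e, hU, hX, he, hAeq⟩ := exists_eq_mul_diagonal_sqrt_eigenvalues_mul A hA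
  obtain ⟨V, Y, f, hV, hY, hf, hBeq⟩ := exists_eq_mul_diagonal_sqrt_eigenvalues_mul B hB
  set s : m → ℝ := fun i => √(hA.eigenvalues i)
  set t : m → ℝ := fun i => √(hB.eigenvalues i)
  have htrace : (Aᵀ * B).trace = ∑ i, ∑ j, s i * (Uᵀ * V) i j * t j * (X * Yᵀ) i j := by
    set M := diagonal s * (Uᵀ * V) * diagonal t with hM
    calc (Aᵀ * B).trace = (M * (Y * Xᵀ)).trace := by
          rw [hAeq, hBeq, transpose_mul, transpose_mul, diagonal_transpose]
          simp only [Matrix.mul_assoc]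
          rw [trace_mul_comm Xᵀ]
          simp only [M, Matrix.mul_assoc]
      _ = ∑ i, ∑ j, M i j * (X * Yᵀ) i j := by
          simp only [trace, diag_apply, mul_apply (M := M), ← transpose_apply (X * Yᵀ),
            transpose_mul, transpose_transpose]
      _ = _ := by simp only [hM, mul_diagonal, diagonal_mul]
  have hW : (Uᵀ * V) * (Uᵀ * V)ᵀ = 1 := by
    rw [transpose_mul, transpose_transpose, Matrix.mul_assoc, ← Matrix.mul_assoc V, hV,
      Matrix.one_mul, mul_eq_one_comm.1 hU]
  have hrow : ∀ i, ∑ j, (X * Yᵀ) i j ^ 2 ≤ 1 := fun i =>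
    (sum_sq_mul_transpose_apply_le X Y hY hf i).trans (by rw [hX, diagonal_apply_eq]; exact he i)
  have hcol : ∀ j, ∑ i, (X * Yᵀ) i j ^ 2 ≤ 1 := fun j => by
    simp only [← transpose_apply (X * Yᵀ), transpose_mul, transpose_transpose]
    exact (sum_sq_mul_transpose_apply_le Y X hX he j).trans
      (by rw [hY, diagonal_apply_eq]; exact hf j)
  rw [htrace]
  exact exists_perm_sum_mul_le_of_mul_transpose_eq_one (fun i => Real.sqrt_nonneg _)
    (fun j => Real.sqrt_nonneg _) hW hrow hcol

end SingularValues

lemma sq_sum_abs_sq_sub_sq_le {ι : Type*} [Fintype ι] (a b : ι → ℝ) :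
    (∑ k, |a k ^ 2 - b k ^ 2|) ^ 2 ≤
      (∑ k, (a k - b k) ^ 2) * (2 * (∑ k, a k ^ 2 + ∑ k, b k ^ 2)) := by
  calc (∑ k, |a k ^ 2 - b k ^ 2|) ^ 2 = (∑ k, |a k - b k| * |a k + b k|) ^ 2 := by
        simp only [sq_sub_sq, abs_mul, mul_comm |a _ + b _|]
    _ ≤ (∑ k, |a k - b k| ^ 2) * ∑ k, |a k + b k| ^ 2 := sum_mul_sq_le_sq_mul_sq _ _ _
    _ ≤ (∑ k, (a k - b k) ^ 2) * (2 * (∑ k, a k ^ 2 + ∑ k, b k ^ 2)) := by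
        simp only [sq_abs]
        refine mul_le_mul_of_nonneg_left ?_ (sum_nonneg fun k _ => sq_nonneg _)
        rw [mul_add, mul_sum, mul_sum, ← sum_add_distrib]
        exact sum_le_sum fun k _ => by linarith [sq_nonneg (a k - b k)]

section Frobenius

variable {n p : ℕ}

lemma frobNorm_sq (M : Matrix (Fin n) (Fin p) ℝ) : frobNorm M ^ 2 = (Mᵀ * M).trace :=
  Real.sq_sqrt <| sum_nonneg fun c _ => by
    rw [diag_apply, ← transpose_transpose M, transpose_transpose Mᵀ, mul_transpose_apply_self]
    positivity

lemma frobNorm_sq_eq_sum_eigenvalues (A : Matrix (Fin n) (Fin p) ℝ) (hA : (A * Aᵀ).IsHermitian) :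
    frobNorm A ^ 2 = ∑ i, hA.eigenvalues i := by
  rw [frobNorm_sq, trace_mul_comm, hA.trace_eq_sum_eigenvalues]
  simp

lemma frobNorm_sub_sq (A B : Matrix (Fin n) (Fin p) ℝ) :
    frobNorm (A - B) ^ 2 = frobNorm A ^ 2 + frobNorm B ^ 2 - 2 * (Aᵀ * B).trace := by
  have hBA : (Bᵀ * A).trace = (Aᵀ * B).trace := by
    rw [← trace_transpose, transpose_mul, transpose_transpose]
  rw [frobNorm_sq, frobNorm_sq, frobNorm_sq, transpose_sub, Matrix.sub_mul, Matrix.mul_sub,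
    Matrix.mul_sub, trace_sub, trace_sub, trace_sub, hBA]
  ring

/-- The Hoffman–Wielandt inequality for singular values. -/
lemma exists_perm_sum_sq_sub_sqrt_eigenvalues_le (A B : Matrix (Fin n) (Fin p) ℝ)
    (hA : (A * Aᵀ).IsHermitian) (hB : (B * Bᵀ).IsHermitian) :
    ∃ σ : Equiv.Perm (Fin n),
      ∑ k, (√(hA.eigenvalues k) - √(hB.eigenvalues (σ k))) ^ 2 ≤ frobNorm (A - B) ^ 2 := by
  obtain ⟨σ, hσ⟩ := exists_perm_trace_transpose_mul_le A B hA hB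
  refine ⟨σ, ?_⟩
  have hexpand : ∀ k, (√(hA.eigenvalues k) - √(hB.eigenvalues (σ k))) ^ 2 = hA.eigenvalues k +
      hB.eigenvalues (σ k) - 2 * (√(hA.eigenvalues k) * √(hB.eigenvalues (σ k))) := fun k => by
    rw [sub_sq, Real.sq_sqrt (eigenvalues_mul_transpose_self_nonneg hA k),
      Real.sq_sqrt (eigenvalues_mul_transpose_self_nonneg hB (σ k))]
    ring
  rw [frobNorm_sub_sq, frobNorm_sq_eq_sum_eigenvalues A hA, frobNorm_sq_eq_sum_eigenvalues B hB,
    ← Equiv.sum_comp σ hB.eigenvalues, sum_congr rfl fun k _ => hexpand k, sum_sub_distrib,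
    sum_add_distrib, ← mul_sum]
  linarith

lemma exists_perm_sq_sum_abs_sub_eigenvalues_le (A B : Matrix (Fin n) (Fin p) ℝ)
    (hA : (A * Aᵀ).IsHermitian) (hB : (B * Bᵀ).IsHermitian) :
    ∃ σ : Equiv.Perm (Fin n), (∑ k, |hA.eigenvalues k - hB.eigenvalues (σ k)|) ^ 2 ≤
      frobNorm (A - B) ^ 2 * (2 * (frobNorm A ^ 2 + frobNorm B ^ 2)) := by
  obtain ⟨σ, hσ⟩ := exists_perm_sum_sq_sub_sqrt_eigenvalues_le A B hA hB
  refine ⟨σ, ?_⟩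
  have h := sq_sum_abs_sq_sub_sq_le (fun k => √(hA.eigenvalues k))
    (fun k => √(hB.eigenvalues (σ k)))
  simp only [Real.sq_sqrt (eigenvalues_mul_transpose_self_nonneg hA _),
    Real.sq_sqrt (eigenvalues_mul_transpose_self_nonneg hB _)] at h
  rw [Equiv.sum_comp σ hB.eigenvalues, ← frobNorm_sq_eq_sum_eigenvalues A hA,
    ← frobNorm_sq_eq_sum_eigenvalues B hB] at h
  exact h.trans (by gcongr)

end Frobenius

/-- **Levy distance perturbation bound for ESDs** (STATEMENT 5). For any `n × p`
real matrices `A`, `B` (`n ≥ 1`),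
`L⁴(F^{AA'}, F^{BB'}) ≤ 2 n⁻² (‖A‖₂² + ‖B‖₂²) ‖A − B‖₂²`. -/
theorem statement5 {n p : ℕ} (hn : 0 < n) (A B : Matrix (Fin n) (Fin p) ℝ) :
    levyDist (esd (A * Aᵀ)) (esd (B * Bᵀ)) ^ 4 ≤
      2 / (n : ℝ) ^ 2 * (frobNorm A ^ 2 + frobNorm B ^ 2) * frobNorm (A - B) ^ 2 := by
  have hA : (A * Aᵀ).IsHermitian := isHermitian_mul_conjTranspose_self A
  have hB : (B * Bᵀ).IsHermitian := isHermitian_mul_conjTranspose_self B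
  obtain ⟨σ, hσ⟩ := exists_perm_sq_sum_abs_sub_eigenvalues_le A B hA hB
  calc levyDist (esd (A * Aᵀ)) (esd (B * Bᵀ)) ^ 4
      = (levyDist (esd (A * Aᵀ)) (esd (B * Bᵀ)) ^ 2) ^ 2 := by ring
    _ ≤ ((∑ k, |hA.eigenvalues k - hB.eigenvalues (σ k)|) / n) ^ 2 := by
        gcongr
        exact levyDist_esd_sq_le hn hA hB σ
    _ ≤ frobNorm (A - B) ^ 2 * (2 * (frobNorm A ^ 2 + frobNorm B ^ 2)) / (n : ℝ) ^ 2 := by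
        rw [div_pow]
        gcongr
    _ = _ := by ring

end
end

section
/- Suppose X_{ij}, i,j = 1,2,…, are i.i.d. real random variables with E(X₁₁²) < ∞. Then max_{1≤j≤n} | X̄_j − E(X₁₁) | → 0 almost surely as n → ∞, where X̄_j = n^{-1} ∑_{i=1}^n X_{ij}. -/
/-!
Fix `ε > 0` and truncate the entries at level `Bₙ = εn / (10 log n)`. The mean of column `j`
splits into the mean of the centred truncated entries, the contribution of the entries of size
at least `Bₙ`, and the bias of the truncated mean.

* The centred truncated entries are bounded by `2Bₙ` and have variance at most `E X²`, so
  Bernstein's inequality bounds the probability that some column sum deviates by `εn` by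
  `O(n⁻⁴)`.
* By Chebyshev and independence, four entries of one column reach `Bₙ` with probability
  `O(n⁻⁴ log⁸ n)`, so some column has four such entries with probability `O(n⁻²)`.
* Since `E X² < ∞`, `∑_{i,j} P(|X| > ε (max i j + 1)) < ∞`, so almost surely
  `|X i j| ≤ ε (max i j + 1) + C`; the at most three large entries of a column thus contribute
  at most `6ε` to its mean.
* The bias tends to `0` because `Bₙ → ∞`.

Borel–Cantelli turns the summable bounds into "eventually, for all columns", giving
`max_j |X̄_j − E X| ≤ 8ε` for large `n`, almost surely.
-/

open MeasureTheory ProbabilityTheory Filter Finset Real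
open scoped NNReal ENNReal

lemma log_pow_le_pow_mul {x : ℝ} (hx : 1 ≤ x) {k : ℕ} (hk : k ≠ 0) :
    log x ^ k ≤ (k : ℝ) ^ k * x := by
  have hlog : log x ≤ x ^ (k⁻¹ : ℝ) / (k : ℝ)⁻¹ :=
    log_le_rpow_div (zero_le_one.trans hx) (by positivity)
  calc log x ^ k ≤ (x ^ (k⁻¹ : ℝ) / (k : ℝ)⁻¹) ^ k := by gcongr; exact log_nonneg hx
    _ = (k : ℝ) ^ k * x := by
      rw [div_inv_eq_mul, mul_pow, rpow_inv_natCast_pow (by linarith) hk, mul_comm]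

lemma tsum_ite_max_add_one_lt_le (y : ℝ) :
    ∑' p : ℕ × ℕ, (if (max p.1 p.2 + 1 : ℝ) < y then 1 else 0 : ℝ≥0∞) ≤ ENNReal.ofReal (y ^ 2) := by
  set m := ⌊y⌋₊
  have hsupp : ∀ p ∉ range m ×ˢ range m,
      (if (max p.1 p.2 + 1 : ℝ) < y then 1 else 0 : ℝ≥0∞) = 0 := by
    intro p hp
    refine if_neg fun hlt => hp ?_
    have : max p.1 p.2 + 1 ≤ m := Nat.le_floor (by exact_mod_cast hlt.le)
    simp only [mem_product, mem_range]
    omega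
  have hm : (m : ℝ) ^ 2 ≤ y ^ 2 := by
    rcases le_or_gt 0 y with hy | hy
    · exact pow_le_pow_left₀ (Nat.cast_nonneg m) (Nat.floor_le hy) 2
    · simp [m, Nat.floor_of_nonpos hy.le, sq_nonneg]
  rw [tsum_eq_sum hsupp]
  calc _ ≤ ∑ _p ∈ range m ×ˢ range m, (1 : ℝ≥0∞) := sum_le_sum fun p _ => by split_ifs <;> simp
    _ = ENNReal.ofReal ((m : ℝ) ^ 2) := by
      rw [sum_const, card_product, card_range, nsmul_one, ← ENNReal.ofReal_natCast]
      push_cast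
      ring_nf
    _ ≤ ENNReal.ofReal (y ^ 2) := ENNReal.ofReal_le_ofReal hm

lemma abs_sub_indicator_Ioc_le (x B : ℝ) :
    |x - Set.indicator (Set.Ioc (-B) B) id x| ≤ if B ≤ |x| then |x| else 0 := by
  split_ifs with h
  · by_cases hx : x ∈ Set.Ioc (-B) B
    · simp [Set.indicator_of_mem hx]
    · simp [Set.indicator_of_notMem hx]
  · have hx : x ∈ Set.Ioc (-B) B := by
      rw [not_le, abs_lt] at h; exact ⟨h.1, h.2.le⟩
    simp [Set.indicator_of_mem hx]

lemma abs_mean_sub_le_of_truncation {x : ℕ → ℝ} {n : ℕ} {B c m ε : ℝ} (hn : 0 < n)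
    (hsum : |∑ i ∈ range n, (Set.indicator (Set.Ioc (-B) B) id (x i) - c)| ≤ ε * n)
    (hcard : #{i ∈ range n | B ≤ |x i|} ≤ 3) (hx : ∀ i < n, |x i| ≤ 2 * ε * n)
    (hc : |c - m| ≤ ε) :
    |(n : ℝ)⁻¹ * ∑ i ∈ range n, x i - m| ≤ 8 * ε := by
  have hn' : (0 : ℝ) < n := by exact_mod_cast hn
  have htail : |∑ i ∈ range n, (x i - Set.indicator (Set.Ioc (-B) B) id (x i))| ≤ 6 * ε * n :=
    calc _ ≤ ∑ i ∈ range n, (if B ≤ |x i| then |x i| else 0) :=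
          (abs_sum_le_sum_abs _ _).trans (sum_le_sum fun i _ => abs_sub_indicator_Ioc_le _ _)
      _ = ∑ i ∈ range n with B ≤ |x i|, |x i| := (sum_filter _ _).symm
      _ ≤ #{i ∈ range n | B ≤ |x i|} • (2 * ε * n) := sum_le_card_nsmul _ _ _ fun i hi =>
          hx i (mem_range.1 (mem_filter.1 hi).1)
      _ ≤ 6 * ε * n := by
          rw [nsmul_eq_mul]
          have hε : (0 : ℝ) ≤ ε := (abs_nonneg _).trans hc
          have : (#{i ∈ range n | B ≤ |x i|} : ℝ) ≤ 3 := by exact_mod_cast hcard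
          nlinarith [mul_le_mul_of_nonneg_right this (by positivity : (0 : ℝ) ≤ 2 * ε * n)]
  have hsplit : (n : ℝ)⁻¹ * ∑ i ∈ range n, x i - m
      = (n : ℝ)⁻¹ * (∑ i ∈ range n, (Set.indicator (Set.Ioc (-B) B) id (x i) - c)
          + ∑ i ∈ range n, (x i - Set.indicator (Set.Ioc (-B) B) id (x i))) + (c - m) := by
    rw [← sum_add_distrib]
    simp only [sub_add_sub_cancel', sum_sub_distrib, sum_const, card_range, nsmul_eq_mul]
    field_simp
    ring
  rw [hsplit]
  calc _ ≤ (n : ℝ)⁻¹ * (ε * n + 6 * ε * n) + ε := by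
        refine (abs_add_le _ _).trans (add_le_add ?_ hc)
        rw [abs_mul, abs_of_pos (inv_pos.2 hn')]
        gcongr
        exact (abs_add_le _ _).trans (add_le_add hsum htail)
    _ = 8 * ε := by field_simp; ring

lemma tendsto_iSup_fin_abs_nhds_zero {a : ℕ → ℕ → ℝ}
    (h : ∀ ε > 0, ∀ᶠ n in atTop, ∀ j < n, |a n j| ≤ ε) :
    Tendsto (fun n => ⨆ j : Fin n, |a n j|) atTop (nhds 0) := by
  refine tendsto_order.2 ⟨fun b hb => Eventually.of_forall fun n =>
    hb.trans_le (Real.iSup_nonneg fun _ => abs_nonneg _), fun b hb => ?_⟩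
  filter_upwards [h (b / 2) (half_pos hb)] with n hn
  exact (Real.iSup_le (fun j : Fin n => hn j.1 j.2) (half_pos hb).le).trans_lt (half_lt_self hb)

section TruncLevel

variable {ε : ℝ} {n : ℕ}

/-- The factor `10` makes `t = (2 truncLevel ε n)⁻¹` in Bernstein's inequality satisfy
`t * εn = 5 log n`, so that a column deviates by `εn` with probability `O(n⁻⁵)`. -/
noncomputable def truncLevel (ε : ℝ) (n : ℕ) : ℝ := ε * n / (10 * log n)

lemma log_pos_of_two_le (hn : 2 ≤ n) : 0 < log n := log_pos (by exact_mod_cast hn)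

lemma truncLevel_pos (hε : 0 < ε) (hn : 2 ≤ n) : 0 < truncLevel ε n := by
  have := log_pos_of_two_le hn
  unfold truncLevel; positivity

lemma tendsto_truncLevel (hε : 0 < ε) : Tendsto (truncLevel ε) atTop atTop := by
  refine tendsto_atTop.2 fun M => ?_
  have hlog := (isLittleO_log_id_atTop.comp_tendsto tendsto_natCast_atTop_atTop).bound
    (c := ε / (10 * (|M| + 1))) (by positivity)
  filter_upwards [hlog, eventually_ge_atTop 2] with n hlog hn
  have hL := log_pos_of_two_le hn
  simp only [Function.comp_apply, norm_of_nonneg hL.le, id, norm_natCast] at hlog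
  unfold truncLevel
  rw [le_div_iff₀ (by positivity)]
  rw [div_mul_eq_mul_div, le_div_iff₀ (by positivity)] at hlog
  nlinarith [le_abs_self M, abs_nonneg M]

lemma bernstein_exponent_truncLevel_le (hε : 0 < ε) {v : ℝ} (hv : 0 ≤ v) (hn : 2 ≤ n) :
    -(2 * truncLevel ε n)⁻¹ * (ε * n) + n * ((2 * truncLevel ε n)⁻¹ ^ 2 * v)
      ≤ 100 * v / ε ^ 2 - 5 * log n := by
  have hL := log_pos_of_two_le hn
  have hn0 : (0 : ℝ) < n := by positivity
  have hL2 : log n ^ 2 ≤ 4 * n :=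
    (log_pow_le_pow_mul (x := n) (by exact_mod_cast (by omega : 1 ≤ n)) two_ne_zero).trans_eq
      (by norm_num)
  have e : (2 * truncLevel ε n)⁻¹ = 5 * log n / (ε * n) := by
    unfold truncLevel; field_simp; ring
  rw [e]
  have : n * ((5 * log n / (ε * n)) ^ 2 * v) ≤ 100 * v / ε ^ 2 := by
    rw [div_pow, le_div_iff₀ (by positivity)]
    field_simp
    nlinarith [mul_le_mul_of_nonneg_left hL2 hv]
  have : 5 * log n / (ε * n) * (ε * n) = 5 * log n := by field_simp
  linarith

lemma pow_mul_div_truncLevel_sq_pow_le (hε : 0 < ε) (v : ℝ) (hn : 2 ≤ n) :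
    (n : ℝ) ^ 5 * (v / truncLevel ε n ^ 2) ^ 4 ≤ 8 ^ 8 * 10 ^ 8 * v ^ 4 / ε ^ 8 / n ^ 2 := by
  have hL := log_pos_of_two_le hn
  have hn0 : (0 : ℝ) < n := by positivity
  have hL8 : log n ^ 8 ≤ 8 ^ 8 * n := by
    simpa using
      log_pow_le_pow_mul (x := n) (by exact_mod_cast (by omega : 1 ≤ n)) (k := 8) (by norm_num)
  have e : v / truncLevel ε n ^ 2 = 100 * v * log n ^ 2 / (ε ^ 2 * n ^ 2) := by
    unfold truncLevel; field_simp; ring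
  rw [e, div_pow, div_div, le_div_iff₀ (by positivity)]
  field_simp
  nlinarith [mul_le_mul_of_nonneg_left hL8 (by positivity : (0:ℝ) ≤ 10 ^ 8 * v ^ 4)]

end TruncLevel

section Probability

variable {Ω : Type*} [MeasurableSpace Ω] {μ : Measure Ω}

lemma ae_eventually_notMem_of_measureReal_le [IsFiniteMeasure μ]
    {s : ℕ → Set Ω} {c : ℕ → ℝ} (hc : Summable c)
    (h : ∀ᶠ n in atTop, μ.real (s n) ≤ c n) : ∀ᵐ ω ∂μ, ∀ᶠ n in atTop, ω ∉ s n := by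
  have hsum : Summable fun n => μ.real (s n) :=
    hc.of_norm_bounded_eventually_nat <| h.mono fun n hn => by
      rwa [norm_of_nonneg measureReal_nonneg]
  refine ae_eventually_notMem ?_
  have hreal : ∀ n, μ (s n) = ENNReal.ofReal (μ.real (s n)) := fun n =>
    (ofReal_measureReal (measure_ne_top _ _)).symm
  rw [tsum_congr hreal, ← ENNReal.ofReal_tsum_of_nonneg (fun n => measureReal_nonneg) hsum]
  exact ENNReal.ofReal_ne_top

lemma measureReal_le_abs_le_integral_sq_div {f : Ω → ℝ} (hf : Integrable (fun ω => f ω ^ 2) μ)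
    {B : ℝ} (hB : 0 < B) : μ.real {ω | B ≤ |f ω|} ≤ (∫ ω, f ω ^ 2 ∂μ) / B ^ 2 := by
  have hset : {ω | B ≤ |f ω|} = {ω | B ^ 2 ≤ f ω ^ 2} := by
    ext ω; simp only [Set.mem_ofPred_eq, sq_le_sq, abs_of_pos hB]
  rw [hset, le_div_iff₀ (by positivity), mul_comm]
  exact mul_meas_ge_le_integral_of_nonneg (ae_of_all _ fun ω => sq_nonneg _) hf _

lemma ae_exists_abs_le_mul_max_add {X : ℕ × ℕ → Ω → ℝ} {W : Ω → ℝ} (hW : Measurable W)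
    (hident : ∀ p, IdentDistrib (X p) W μ μ) (hsq : Integrable (fun ω => W ω ^ 2) μ)
    {ε : ℝ} (hε : 0 < ε) :
    ∀ᵐ ω ∂μ, ∃ C, ∀ i j, |X (i, j) ω| ≤ ε * (max i j + 1) + C := by
  set A : ℕ × ℕ → Set ℝ := fun p => {x | (max p.1 p.2 + 1 : ℝ) < |x| / ε}
  have hA : ∀ p, MeasurableSet (A p) := fun p =>
    measurableSet_lt measurable_const (continuous_abs.measurable.div_const ε)
  have hfin : ∑' p, μ (X p ⁻¹' A p) ≠ ∞ := by
    have hcount : ∀ p, μ (X p ⁻¹' A p)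
        = ∫⁻ ω, (if (max p.1 p.2 + 1 : ℝ) < |W ω| / ε then 1 else 0) ∂μ := fun p => by
      rw [(hident p).measure_mem_eq (hA p), ← lintegral_indicator_one (hW (hA p))]
      rfl
    have hmeas : ∀ p : ℕ × ℕ, AEMeasurable
        (fun ω => if (max p.1 p.2 + 1 : ℝ) < |W ω| / ε then (1 : ℝ≥0∞) else 0) μ := fun p =>
      (Measurable.ite (hW (hA p)) measurable_const measurable_const).aemeasurable
    rw [tsum_congr hcount, ← lintegral_tsum hmeas]
    refine ne_top_of_le_ne_top ?_ (lintegral_mono fun ω => tsum_ite_max_add_one_lt_le _)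
    simp_rw [div_pow, sq_abs]
    exact (hsq.div_const _).lintegral_lt_top.ne
  filter_upwards [ae_finite_setOfPred_mem hfin] with ω hω
  refine ⟨∑ p ∈ hω.toFinset, |X p ω|, fun i j => ?_⟩
  have hC : 0 ≤ ∑ p ∈ hω.toFinset, |X p ω| := sum_nonneg fun _ _ => abs_nonneg _
  by_cases h : (i, j) ∈ {p | ω ∈ X p ⁻¹' A p}
  · have := single_le_sum (f := fun p => |X p ω|) (fun _ _ => abs_nonneg _)
      (hω.mem_toFinset.2 h)
    have : 0 ≤ ε * (max i j + 1 : ℝ) := by positivity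
    linarith
  · have : |X (i, j) ω| / ε ≤ max i j + 1 := not_lt.1 h
    rw [div_le_iff₀ hε] at this
    linarith

variable [IsProbabilityMeasure μ]

lemma mgf_le_exp_mul_integral_sq {Y : Ω → ℝ} (hY : AEStronglyMeasurable Y μ) {D t : ℝ}
    (hb : ∀ ω, |Y ω| ≤ D) (hmean : μ[Y] = 0) (htD : |t| * D ≤ 1) :
    mgf Y μ t ≤ exp (t ^ 2 * ∫ ω, Y ω ^ 2 ∂μ) := by
  have hY1 : Integrable Y μ := .of_bound hY D (ae_of_all _ hb)
  have hY2 : Integrable (fun ω => Y ω ^ 2) μ :=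
    .of_bound (hY.pow 2) (D ^ 2) (ae_of_all _ fun ω => by
      simpa [abs_pow] using pow_le_pow_left₀ (abs_nonneg _) (hb ω) 2)
  have hlin : Integrable (fun ω => 1 + t * Y ω) μ := (integrable_const 1).add (hY1.const_mul t)
  have hpt : ∀ ω, exp (t * Y ω) ≤ 1 + t * Y ω + t ^ 2 * Y ω ^ 2 := fun ω => by
    have htY : |t * Y ω| ≤ 1 := by
      rw [abs_mul]; exact (mul_le_mul_of_nonneg_left (hb ω) (abs_nonneg t)).trans htD
    have := (abs_le.1 (abs_exp_sub_one_sub_id_le htY)).2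
    linarith [mul_pow t (Y ω) 2]
  calc mgf Y μ t ≤ ∫ ω, (1 + t * Y ω + t ^ 2 * Y ω ^ 2) ∂μ :=
        integral_mono_of_nonneg (ae_of_all _ fun ω => (exp_pos _).le)
          (hlin.add (hY2.const_mul (t ^ 2))) (ae_of_all _ hpt)
    _ = 1 + t ^ 2 * ∫ ω, Y ω ^ 2 ∂μ := by
      rw [integral_add hlin (hY2.const_mul _), integral_add (integrable_const 1) (hY1.const_mul t),
        integral_const_mul, integral_const_mul, hmean]
      simp
    _ ≤ exp (t ^ 2 * ∫ ω, Y ω ^ 2 ∂μ) := by linarith [add_one_le_exp (t ^ 2 * ∫ ω, Y ω ^ 2 ∂μ)]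

lemma measureReal_sum_ge_le_of_iIndepFun {ι : Type*} {Y : ι → Ω → ℝ} (hY : ∀ i, Measurable (Y i))
    (hindep : iIndepFun Y μ) (s : Finset ι) {D v t : ℝ} (hb : ∀ i ω, |Y i ω| ≤ D)
    (hmean : ∀ i, μ[Y i] = 0) (hvar : ∀ i, ∫ ω, Y i ω ^ 2 ∂μ ≤ v) (ht : 0 ≤ t)
    (htD : t * D ≤ 1) (a : ℝ) :
    μ.real {ω | a ≤ ∑ i ∈ s, Y i ω} ≤ exp (-t * a + #s * (t ^ 2 * v)) := by
  have hexp_int : ∀ i ∈ s, Integrable (fun ω => exp (t * Y i ω)) μ := fun i _ =>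
    .of_bound ((hY i).const_mul t).exp.aestronglyMeasurable (exp (t * D)) (ae_of_all _ fun ω => by
      rw [norm_of_nonneg (exp_pos _).le, exp_le_exp]
      exact mul_le_mul_of_nonneg_left ((le_abs_self _).trans (hb i ω)) ht)
  have hsum_int := hindep.integrable_exp_mul_sum hY hexp_int
  calc μ.real {ω | a ≤ ∑ i ∈ s, Y i ω} = μ.real {ω | a ≤ (∑ i ∈ s, Y i) ω} := by
        simp only [Finset.sum_apply]
    _ ≤ exp (-t * a) * mgf (∑ i ∈ s, Y i) μ t := measure_ge_le_exp_mul_mgf a ht hsum_int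
    _ = exp (-t * a) * ∏ i ∈ s, mgf (Y i) μ t := by rw [hindep.mgf_sum hY]
    _ ≤ exp (-t * a) * ∏ _i ∈ s, exp (t ^ 2 * v) := by
        gcongr with i
        · exact fun i _ => mgf_nonneg
        · refine (mgf_le_exp_mul_integral_sq (hY i).aestronglyMeasurable (hb i) (hmean i)
            (by rwa [abs_of_nonneg ht])).trans ?_
          gcongr
          exact hvar i
    _ = exp (-t * a + #s * (t ^ 2 * v)) := by
        rw [prod_const, ← exp_nat_mul, ← exp_add]

lemma measureReal_abs_sum_ge_le_of_iIndepFun {ι : Type*} {Y : ι → Ω → ℝ}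
    (hY : ∀ i, Measurable (Y i)) (hindep : iIndepFun Y μ) (s : Finset ι) {D v t : ℝ}
    (hb : ∀ i ω, |Y i ω| ≤ D) (hmean : ∀ i, μ[Y i] = 0) (hvar : ∀ i, ∫ ω, Y i ω ^ 2 ∂μ ≤ v)
    (ht : 0 ≤ t) (htD : t * D ≤ 1) (a : ℝ) :
    μ.real {ω | a ≤ |∑ i ∈ s, Y i ω|} ≤ 2 * exp (-t * a + #s * (t ^ 2 * v)) := by
  have hsplit : {ω | a ≤ |∑ i ∈ s, Y i ω|}
      ⊆ {ω | a ≤ ∑ i ∈ s, Y i ω} ∪ {ω | a ≤ ∑ i ∈ s, -Y i ω} := fun ω (hω : a ≤ |_|) => by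
    simpa only [Set.mem_union, Set.mem_ofPred_eq, sum_neg_distrib] using le_abs.1 hω
  have hupper := measureReal_sum_ge_le_of_iIndepFun hY hindep s hb hmean hvar ht htD a
  have hlower := measureReal_sum_ge_le_of_iIndepFun (Y := fun i => -Y i) (fun i => (hY i).neg)
    (hindep.comp (fun _ => Neg.neg) fun _ => measurable_neg) s (by simpa using hb)
    (by simpa [integral_neg] using hmean) (by simpa using hvar) ht htD a
  simp only [Pi.neg_apply] at hlower
  calc μ.real {ω | a ≤ |∑ i ∈ s, Y i ω|}
      ≤ μ.real ({ω | a ≤ ∑ i ∈ s, Y i ω} ∪ {ω | a ≤ ∑ i ∈ s, -Y i ω}) := measureReal_mono hsplit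
    _ ≤ _ := measureReal_union_le _ _
    _ ≤ 2 * exp (-t * a + #s * (t ^ 2 * v)) := by linarith

lemma measureReal_card_filter_mem_le_of_iIndepFun {ι : Type*} {Y : ι → Ω → ℝ}
    (hindep : iIndepFun Y μ) (s : Finset ι) {A : Set ℝ} [DecidablePred (· ∈ A)]
    (hA : MeasurableSet A) {p : ℝ} (hp : ∀ i, μ.real (Y i ⁻¹' A) ≤ p) (k : ℕ) :
    μ.real {ω | k ≤ #{i ∈ s | Y i ω ∈ A}} ≤ (#s).choose k * p ^ k := by
  have hsub : {ω | k ≤ #{i ∈ s | Y i ω ∈ A}} ⊆ ⋃ t ∈ s.powersetCard k, ⋂ i ∈ t, Y i ⁻¹' A := by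
    intro ω hω
    obtain ⟨t, hts, hcard⟩ := exists_subset_card_eq hω
    exact Set.mem_iUnion₂.2 ⟨t, mem_powersetCard.2 ⟨hts.trans (filter_subset _ _), hcard⟩,
      Set.mem_iInter₂.2 fun i hi => (mem_filter.1 (hts hi)).2⟩
  calc μ.real {ω | k ≤ #{i ∈ s | Y i ω ∈ A}}
      ≤ ∑ t ∈ s.powersetCard k, μ.real (⋂ i ∈ t, Y i ⁻¹' A) :=
        (measureReal_mono hsub (measure_ne_top _ _)).trans (measureReal_biUnion_finset_le _ _)
    _ = ∑ t ∈ s.powersetCard k, ∏ i ∈ t, μ.real (Y i ⁻¹' A) := by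
        refine sum_congr rfl fun t _ => ?_
        rw [measureReal_def, hindep.measure_inter_preimage_eq_mul t fun _ _ => hA,
          ENNReal.toReal_prod]
        rfl
    _ ≤ ∑ t ∈ s.powersetCard k, p ^ k := by
        refine sum_le_sum fun t ht => ?_
        rw [← (mem_powersetCard.1 ht).2, ← prod_const]
        exact prod_le_prod (fun _ _ => measureReal_nonneg) fun i _ => hp i
    _ = (#s).choose k * p ^ k := by rw [sum_const, card_powersetCard, nsmul_eq_mul]

section DoubleArray

variable {X : ℕ × ℕ → Ω → ℝ} {ε : ℝ} {n : ℕ}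

lemma integral_sq_truncation_sub_integral_le {f : Ω → ℝ} (hf : AEStronglyMeasurable f μ)
    (hsq : Integrable (fun ω => f ω ^ 2) μ) (B : ℝ) :
    ∫ ω, (truncation f B ω - μ[truncation f B]) ^ 2 ∂μ ≤ ∫ ω, f ω ^ 2 ∂μ := by
  have hT := hf.truncation (A := B)
  have hsq_le : ∀ ω, truncation f B ω ^ 2 ≤ f ω ^ 2 := fun ω =>
    sq_le_sq.2 (abs_truncation_le_abs_self _ _ _)
  calc _ = variance (truncation f B) μ := (variance_eq_integral hT.aemeasurable).symm
    _ ≤ ∫ ω, truncation f B ω ^ 2 ∂μ := variance_le_expectation_sq hT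
    _ ≤ ∫ ω, f ω ^ 2 ∂μ := integral_mono (hsq.mono' (hT.pow 2)
        (ae_of_all _ fun ω => (norm_of_nonneg (sq_nonneg _)).trans_le (hsq_le ω))) hsq hsq_le

lemma measureReal_abs_sum_truncation_sub_ge_le (hmeas : ∀ ij, Measurable (X ij))
    (hindep : iIndepFun X μ) (hident : ∀ ij, IdentDistrib (X ij) (X (0, 0)) μ μ)
    (hsq : Integrable (fun ω => X (0, 0) ω ^ 2) μ) {B : ℝ} (hB : 0 < B) (n j : ℕ) (a : ℝ) :
    μ.real {ω | a ≤ |∑ i ∈ range n, (truncation (X (i, j)) B ω - μ[truncation (X (0, 0)) B])|}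
      ≤ 2 * exp (-(2 * B)⁻¹ * a + n * ((2 * B)⁻¹ ^ 2 * ∫ ω, X (0, 0) ω ^ 2 ∂μ)) := by
  set c := μ[truncation (X (0, 0)) B]
  have hind : Measurable (Set.indicator (Set.Ioc (-B) B) id) :=
    measurable_id.indicator measurableSet_Ioc
  have hTb : ∀ p ω, |truncation (X p) B ω| ≤ B := fun p ω =>
    (abs_truncation_le_bound _ _ _).trans_eq (abs_of_pos hB)
  have hTint : ∀ p, Integrable (truncation (X p) B) μ := fun p =>
    .of_bound (hmeas p).aestronglyMeasurable.truncation B (ae_of_all _ (hTb p))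
  have hc : |c| ≤ B := by
    simpa using norm_integral_le_of_norm_le_const (μ := μ)
      (ae_of_all _ fun ω => (norm_eq_abs _).trans_le (hTb (0, 0) ω))
  have hindepT : iIndepFun (fun i ω => truncation (X (i, j)) B ω - c) μ :=
    (hindep.precomp (Prod.mk_left_injective j)).comp
      (fun _ x => Set.indicator (Set.Ioc (-B) B) id x - c) fun _ => hind.sub_const c
  have hvar : ∀ i, ∫ ω, (truncation (X (i, j)) B ω - c) ^ 2 ∂μ ≤ ∫ ω, X (0, 0) ω ^ 2 ∂μ :=
    fun i => ((hident (i, j)).truncation.comp ((measurable_sub_const c).pow_const 2)).integral_eq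
      |>.trans_le (integral_sq_truncation_sub_integral_le (hmeas _).aestronglyMeasurable hsq B)
  have hcol := measureReal_abs_sum_ge_le_of_iIndepFun
    (Y := fun i ω => truncation (X (i, j)) B ω - c) (fun i => (hind.comp (hmeas _)).sub_const c)
    hindepT (range n) (D := 2 * B) (fun i ω => (abs_sub _ _).trans (by linarith [hTb (i, j) ω]))
    (fun i => by
      rw [integral_sub (hTint _) (integrable_const c), (hident _).truncation.integral_eq]
      simp [c])
    hvar (by positivity) (inv_mul_cancel₀ (by positivity)).le a
  simpa using hcol

lemma measureReal_exists_abs_sum_truncation_sub_ge_le (hmeas : ∀ ij, Measurable (X ij))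
    (hindep : iIndepFun X μ) (hident : ∀ ij, IdentDistrib (X ij) (X (0, 0)) μ μ)
    (hsq : Integrable (fun ω => X (0, 0) ω ^ 2) μ)
    (hε : 0 < ε) (hn : 2 ≤ n) :
    μ.real (⋃ j ∈ range n, {ω | ε * n ≤ |∑ i ∈ range n,
      (truncation (X (i, j)) (truncLevel ε n) ω - μ[truncation (X (0, 0)) (truncLevel ε n)])|})
      ≤ 2 * exp (100 * (∫ ω, X (0, 0) ω ^ 2 ∂μ) / ε ^ 2) / n ^ 4 := by
  set v := ∫ ω, X (0, 0) ω ^ 2 ∂μ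
  have hv : 0 ≤ v := integral_nonneg fun ω => sq_nonneg _
  have hn' : (0 : ℝ) < n := by positivity
  have hexp : exp (100 * v / ε ^ 2 - 5 * log n) = exp (100 * v / ε ^ 2) / n ^ 5 := by
    rw [exp_sub, show (5 : ℝ) * log n = log ((n : ℝ) ^ 5) by rw [log_pow]; norm_num,
      exp_log (by positivity)]
  calc _ ≤ ∑ j ∈ range n, μ.real {ω | ε * n ≤ |∑ i ∈ range n,
        (truncation (X (i, j)) (truncLevel ε n) ω - μ[truncation (X (0, 0)) (truncLevel ε n)])|} :=
        measureReal_biUnion_finset_le _ _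
    _ ≤ ∑ j ∈ range n, 2 * (exp (100 * v / ε ^ 2) / n ^ 5) := sum_le_sum fun j _ => by
        refine (measureReal_abs_sum_truncation_sub_ge_le hmeas hindep hident hsq
          (truncLevel_pos hε hn) n j _).trans ?_
        rw [← hexp]
        gcongr
        exact bernstein_exponent_truncLevel_le hε hv hn
    _ = 2 * exp (100 * v / ε ^ 2) / n ^ 4 := by
        rw [sum_const, card_range, nsmul_eq_mul]
        field_simp

lemma measureReal_exists_four_le_card_le (hindep : iIndepFun X μ)
    (hident : ∀ ij, IdentDistrib (X ij) (X (0, 0)) μ μ)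
    (hsq : Integrable (fun ω => X (0, 0) ω ^ 2) μ) (hε : 0 < ε) (hn : 2 ≤ n) :
    μ.real (⋃ j ∈ range n, {ω | 4 ≤ #{i ∈ range n | truncLevel ε n ≤ |X (i, j) ω|}})
      ≤ 8 ^ 8 * 10 ^ 8 * (∫ ω, X (0, 0) ω ^ 2 ∂μ) ^ 4 / ε ^ 8 / n ^ 2 := by
  set v := ∫ ω, X (0, 0) ω ^ 2 ∂μ
  set B := truncLevel ε n
  have hA : MeasurableSet {x : ℝ | B ≤ |x|} := measurableSet_le measurable_const measurable_abs
  have hp : ∀ i j, μ.real (X (i, j) ⁻¹' {x | B ≤ |x|}) ≤ v / B ^ 2 := fun i j => by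
    rw [measureReal_def, (hident _).measure_mem_eq hA]
    exact measureReal_le_abs_le_integral_sq_div hsq (truncLevel_pos hε hn)
  calc _ ≤ ∑ j ∈ range n, μ.real {ω | 4 ≤ #{i ∈ range n | B ≤ |X (i, j) ω|}} :=
        measureReal_biUnion_finset_le _ _
    _ ≤ ∑ j ∈ range n, (n : ℝ) ^ 4 * (v / B ^ 2) ^ 4 := sum_le_sum fun j _ => by
        have := measureReal_card_filter_mem_le_of_iIndepFun
          (hindep.precomp (Prod.mk_left_injective j)) (range n) hA (fun i => hp i j) 4
        refine this.trans ?_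
        rw [card_range]
        gcongr
        exact_mod_cast Nat.choose_le_pow n 4
    _ = (n : ℝ) ^ 5 * (v / B ^ 2) ^ 4 := by rw [sum_const, card_range, nsmul_eq_mul]; ring
    _ ≤ _ := pow_mul_div_truncLevel_sq_pow_le hε v hn

lemma ae_eventually_abs_colMean_sub_le (hmeas : ∀ ij, Measurable (X ij))
    (hindep : iIndepFun X μ) (hident : ∀ ij, IdentDistrib (X ij) (X (0, 0)) μ μ)
    (hsq : Integrable (fun ω => X (0, 0) ω ^ 2) μ)
    (hint : Integrable (X (0, 0)) μ) (hε : 0 < ε) :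
    ∀ᵐ ω ∂μ, ∀ᶠ n : ℕ in atTop, ∀ j < n,
      |(n : ℝ)⁻¹ * ∑ i ∈ range n, X (i, j) ω - ∫ ω', X (0, 0) ω' ∂μ| ≤ 8 * ε := by
  set v := ∫ ω, X (0, 0) ω ^ 2 ∂μ
  have hbern := ae_eventually_notMem_of_measureReal_le
    ((summable_nat_pow_inv.2 (by norm_num : 1 < 4)).mul_left (2 * exp (100 * v / ε ^ 2)))
    ((eventually_ge_atTop 2).mono fun n hn =>
      (measureReal_exists_abs_sum_truncation_sub_ge_le hmeas hindep hident hsq hε hn).trans_eq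
        (div_eq_mul_inv _ _))
  have hcount := ae_eventually_notMem_of_measureReal_le
    ((summable_nat_pow_inv.2 (by norm_num : 1 < 2)).mul_left (8 ^ 8 * 10 ^ 8 * v ^ 4 / ε ^ 8))
    ((eventually_ge_atTop 2).mono fun n hn =>
      (measureReal_exists_four_le_card_le hindep hident hsq hε hn).trans_eq (div_eq_mul_inv _ _))
  have hmean : ∀ᶠ n in atTop,
      |μ[truncation (X (0, 0)) (truncLevel ε n)] - ∫ ω', X (0, 0) ω' ∂μ| ≤ ε :=
    (((tendsto_integral_truncation hint).comp (tendsto_truncLevel hε)).eventually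
      (Metric.closedBall_mem_nhds _ hε)).mono fun n hn => by
        rw [← Real.dist_eq]; exact hn
  filter_upwards [hbern, hcount, ae_exists_abs_le_mul_max_add (hmeas _) hident hsq hε]
    with ω hbern hcount ⟨C, hC⟩
  filter_upwards [hbern, hcount, hmean, eventually_gt_atTop 0, eventually_ge_atTop ⌈C / ε⌉₊]
    with n hbern hcount hmean hn hCn j hj
  refine abs_mean_sub_le_of_truncation (x := fun i => X (i, j) ω) (B := truncLevel ε n) hn
    (not_le.1 fun h => hbern (Set.mem_iUnion₂.2 ⟨j, mem_range.2 hj, h⟩)).le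
    (Nat.lt_succ_iff.1 (not_le.1 fun h => hcount (Set.mem_iUnion₂.2 ⟨j, mem_range.2 hj, h⟩)))
    (fun i hi => ?_) hmean
  have hCε : C ≤ ε * n := by
    rw [← div_le_iff₀' hε]; exact (Nat.le_ceil _).trans (by exact_mod_cast hCn)
  have hmax : (max i j + 1 : ℝ) ≤ n := by exact_mod_cast max_lt hi hj
  calc |X (i, j) ω| ≤ ε * (max i j + 1) + C := hC i j
    _ ≤ 2 * ε * n := by nlinarith

end DoubleArray

end Probability

/-- **Uniform strong law for column means of an i.i.d. double array** (STATEMENT 6).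
If `X i j`, `i, j ∈ ℕ`, are i.i.d. real random variables with `E X₁₁² < ∞`, then
`max_{1 ≤ j ≤ n} |X̄_j − E X₁₁| → 0` almost surely, where
`X̄_j = n⁻¹ ∑_{i<n} X i j`. -/
theorem statement6
    {Ω : Type} [MeasurableSpace Ω] (μ : Measure Ω) [IsProbabilityMeasure μ]
    (X : ℕ × ℕ → Ω → ℝ) (hmeas : ∀ ij, Measurable (X ij))
    (hindep : iIndepFun X μ)
    (hident : ∀ ij, IdentDistrib (X ij) (X (0, 0)) μ μ)
    (hint : Integrable (X (0, 0)) μ)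
    (hsq : Integrable (fun ω => (X (0, 0) ω) ^ 2) μ) :
    ∀ᵐ ω ∂μ, Tendsto
      (fun n => ⨆ j : Fin n,
        |(n : ℝ)⁻¹ * ∑ i : Fin n, X (i.1, j.1) ω - ∫ ω', X (0, 0) ω' ∂μ|)
      atTop (nhds 0) := by
  have hk : ∀ᵐ ω ∂μ, ∀ k : ℕ, ∀ᶠ n : ℕ in atTop, ∀ j < n,
      |(n : ℝ)⁻¹ * ∑ i ∈ range n, X (i, j) ω - ∫ ω', X (0, 0) ω' ∂μ| ≤ 8 * (k + 1 : ℝ)⁻¹ :=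
    ae_all_iff.2 fun k =>
      ae_eventually_abs_colMean_sub_le hmeas hindep hident hsq hint (by positivity)
  filter_upwards [hk] with ω hω
  have hrange : ∀ n (j : Fin n), ∑ i : Fin n, X (i.1, j.1) ω = ∑ i ∈ range n, X (i, j) ω :=
    fun n j => Fin.sum_univ_eq_sum_range (fun i => X (i, j) ω) n
  simp only [hrange]
  refine tendsto_iSup_fin_abs_nhds_zero
    (a := fun n j => (n : ℝ)⁻¹ * ∑ i ∈ range n, X (i, j) ω - ∫ ω', X (0, 0) ω' ∂μ) fun ε hε => ?_
  obtain ⟨k, hkε⟩ := exists_nat_one_div_lt (by positivity : 0 < ε / 8)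
  filter_upwards [hω k] with n hn j hj
  exact (hn j hj).trans (by rw [one_div] at hkε; linarith)
end

section
/- Let τ ∈ (0,1], let f_τ be the Marčenko–Pastur density with parameter τ, and let γ > 0. Then ∫ (1+γx)^{-2} f_τ(x) dx / ∫ (1+γx)^{-1} f_τ(x) dx > ∫ x(1+γx)^{-2} f_τ(x) dx / ∫ x(1+γx)^{-1} f_τ(x) dx; equivalently, with f₁ = h_{2,1}, f₂ = h_{2,0}, g₁ = h_{1,1}, g₂ = h_{1,0}, one has f₂(γ)/g₂(γ) − f₁(γ)/g₁(γ) > 0, so that the limiting derivative Δ'_∞(γ*) = −(σ²_{ε0}/γ*){f₂(γ*)/g₂(γ*) − f₁(γ*)/g₁(γ*)} is strictly negative for any γ* > 0 and σ²_{ε0} > 0. -/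
open MeasureTheory Filter

noncomputable section

/-- Marčenko–Pastur density with parameter `τ`. -/
def mpDensity (τ x : ℝ) : ℝ :=
  if (1 - Real.sqrt τ) ^ 2 ≤ x ∧ x ≤ (1 + Real.sqrt τ) ^ 2 then
    Real.sqrt (((1 + Real.sqrt τ) ^ 2 - x) * (x - (1 - Real.sqrt τ) ^ 2)) / (2 * Real.pi * τ * x)
  else 0

/-- `h_{k,l}(γ) = ∫ x^l (1+γx)^{-k} f_τ(x) dx`. -/
def hkl (τ : ℝ) (k l : ℕ) (γ : ℝ) : ℝ :=
  ∫ x : ℝ, x ^ l / (1 + γ * x) ^ k * mpDensity τ x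

/-!
Write `G x = (1 + γx)⁻¹`, which lies in `(0, 1)` on the support `[b₋, b₊] ⊆ [0, ∞)`, and let
`m = ∫ f_τ`, `D = ∫ G f_τ`, `A = ∫ G² f_τ`. Since `x G = (1 - G)/γ`, one has `h_{1,0} = D`,
`h_{2,0} = A`, `h_{1,1} = (m - D)/γ` and `h_{2,1} = (D - A)/γ`, so the claimed inequality
`h_{2,1}/h_{1,1} < h_{2,0}/h_{1,0}` reduces to `D² < A m`. This is the strict Cauchy–Schwarz
inequality for the weight `f_τ`: `G` is injective, so `(G - c)² f_τ` vanishes at most at one point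
of `(b₋, b₊)` and its integral `A - 2cD + c²m` is positive for every `c`.
-/

open Real Set Function

theorem integral_pos_of_pos_on_Ioo {u : ℝ → ℝ} {a b x₀ : ℝ} (hab : a < b) (hu : Integrable u)
    (hnn : 0 ≤ u) (hpos : ∀ x ∈ Ioo a b, x ≠ x₀ → 0 < u x) : 0 < ∫ x, u x := by
  rw [integral_pos_iff_support_of_nonneg hnn hu]
  calc (0 : ENNReal) < volume (Ioo a b \ {x₀}) := by
        rw [measure_sdiff_null (measure_singleton x₀), Real.volume_Ioo]
        exact ENNReal.ofReal_pos.mpr (sub_pos.mpr hab)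
    _ ≤ volume (support u) := measure_mono fun x hx => (hpos x hx.1 hx.2).ne'

theorem sq_integral_mul_lt_of_forall_integral_sub_sq_mul_pos {α : Type*} [MeasurableSpace α]
    {μ : Measure α} {g w : α → ℝ} (hw : Integrable w μ)
    (hgw : Integrable (fun x => g x * w x) μ) (hg2w : Integrable (fun x => g x ^ 2 * w x) μ)
    (hm : 0 < ∫ x, w x ∂μ) (hvar : ∀ c, 0 < ∫ x, (g x - c) ^ 2 * w x ∂μ) :
    (∫ x, g x * w x ∂μ) ^ 2 < (∫ x, g x ^ 2 * w x ∂μ) * ∫ x, w x ∂μ := by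
  set m := ∫ x, w x ∂μ
  set D := ∫ x, g x * w x ∂μ
  set A := ∫ x, g x ^ 2 * w x ∂μ
  have hexpand (c : ℝ) : ∫ x, (g x - c) ^ 2 * w x ∂μ = A - 2 * c * D + c ^ 2 * m := by
    have hpt : (fun x => (g x - c) ^ 2 * w x) =
        fun x => g x ^ 2 * w x - 2 * c * (g x * w x) + c ^ 2 * w x := by
      funext x; ring
    have hsub : Integrable (fun x => g x ^ 2 * w x - 2 * c * (g x * w x)) μ :=
      hg2w.sub (hgw.const_mul _)
    rw [hpt, integral_add hsub (hw.const_mul _), integral_sub hg2w (hgw.const_mul _),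
      integral_const_mul, integral_const_mul]
  have hmin := hvar (D / m)
  rw [hexpand] at hmin
  have hvalue : m * (A - 2 * (D / m) * D + (D / m) ^ 2 * m) = A * m - D ^ 2 := by
    field_simp; ring
  nlinarith [mul_pos hm hmin]

structure PosDensityOn (f : ℝ → ℝ) (a b : ℝ) : Prop where
  lt : a < b
  integrable : Integrable f
  nonneg : ∀ x, 0 ≤ f x
  support_subset : support f ⊆ Icc a b
  pos : ∀ x ∈ Ioo a b, 0 < f x

namespace PosDensityOn

variable {f : ℝ → ℝ} {a b : ℝ}

theorem eq_zero_of_notMem (hf : PosDensityOn f a b) {x : ℝ} (hx : x ∉ Icc a b) : f x = 0 :=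
  notMem_support.mp fun h => hx (hf.support_subset h)

theorem integrable_mul (hf : PosDensityOn f a b) {g : ℝ → ℝ} (hg : ContinuousOn g (Icc a b)) :
    Integrable (fun x => g x * f x) :=
  (integrableOn_iff_integrable_of_support_subset
    ((support_mul_subset_right g f).trans hf.support_subset)).mp
    (IntegrableOn.continuousOn_mul hg hf.integrable.integrableOn isCompact_Icc)

theorem integral_mul_congr (hf : PosDensityOn f a b) {g₁ g₂ : ℝ → ℝ} (h : EqOn g₁ g₂ (Icc a b)) :
    ∫ x, g₁ x * f x = ∫ x, g₂ x * f x := by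
  congr 1; funext x
  by_cases hx : x ∈ Icc a b
  · rw [h hx]
  · simp [hf.eq_zero_of_notMem hx]

theorem integral_mul_pos (hf : PosDensityOn f a b) {g : ℝ → ℝ} {x₀ : ℝ}
    (hg : ContinuousOn g (Icc a b)) (hg_nonneg : ∀ x ∈ Icc a b, 0 ≤ g x)
    (hg_pos : ∀ x ∈ Ioo a b, x ≠ x₀ → 0 < g x) : 0 < ∫ x, g x * f x := by
  refine integral_pos_of_pos_on_Ioo hf.lt (hf.integrable_mul hg) (fun x => ?_)
    fun x hx hne => mul_pos (hg_pos x hx hne) (hf.pos x hx)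
  by_cases hx : x ∈ Icc a b
  · exact mul_nonneg (hg_nonneg x hx) (hf.nonneg x)
  · simp [hf.eq_zero_of_notMem hx]

theorem integral_pos (hf : PosDensityOn f a b) : 0 < ∫ x, f x :=
  integral_pos_of_pos_on_Ioo hf.lt hf.integrable hf.nonneg (x₀ := a) fun x hx _ => hf.pos x hx

end PosDensityOn

def resolventMoment (f : ℝ → ℝ) (k l : ℕ) (γ : ℝ) : ℝ :=
  ∫ x, x ^ l / (1 + γ * x) ^ k * f x

theorem resolventMoment_zero_right (f : ℝ → ℝ) (k : ℕ) (γ : ℝ) :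
    resolventMoment f k 0 γ = ∫ x, (1 + γ * x)⁻¹ ^ k * f x := by
  simp only [resolventMoment, pow_zero, one_div, inv_pow]

section Resolvent

variable {a b γ : ℝ} (ha : 0 ≤ a) (hγ : 0 < γ)
include ha hγ

theorem one_add_mul_pos_of_mem_Icc {x : ℝ} (hx : x ∈ Icc a b) : 0 < 1 + γ * x := by
  have := ha.trans hx.1
  positivity

theorem continuousOn_resolvent : ContinuousOn (fun x => (1 + γ * x)⁻¹) (Icc a b) :=
  ContinuousOn.inv₀ (by fun_prop) fun x hx => (one_add_mul_pos_of_mem_Icc ha hγ hx).ne'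

end Resolvent

namespace PosDensityOn

variable {f : ℝ → ℝ} {a b γ : ℝ} (hf : PosDensityOn f a b) (ha : 0 ≤ a) (hγ : 0 < γ)
include hf ha hγ

theorem resolventMoment_pos (k l : ℕ) : 0 < resolventMoment f k l γ := by
  refine hf.integral_mul_pos (x₀ := a) ?_ (fun x hx => ?_) fun x hx _ => ?_
  · exact ContinuousOn.div (by fun_prop) (by fun_prop)
      fun x hx => pow_ne_zero k (one_add_mul_pos_of_mem_Icc ha hγ hx).ne'
  · have := ha.trans hx.1
    positivity
  · have := ha.trans_lt hx.1
    positivity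

theorem resolventMoment_succ_one (k : ℕ) :
    resolventMoment f (k + 1) 1 γ =
      γ⁻¹ * (resolventMoment f k 0 γ - resolventMoment f (k + 1) 0 γ) := by
  have hint (n : ℕ) : Integrable (fun x => (1 + γ * x)⁻¹ ^ n * f x) :=
    hf.integrable_mul ((continuousOn_resolvent ha hγ).pow n)
  calc resolventMoment f (k + 1) 1 γ
      = ∫ x, (γ⁻¹ * ((1 + γ * x)⁻¹ ^ k - (1 + γ * x)⁻¹ ^ (k + 1))) * f x :=
        hf.integral_mul_congr fun x hx => by
          have := (one_add_mul_pos_of_mem_Icc ha hγ hx).ne'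
          rw [inv_pow, inv_pow, pow_succ, eq_comm, inv_mul_eq_iff_eq_mul₀ hγ.ne']
          field_simp
          ring
    _ = _ := by
        simp_rw [mul_assoc, sub_mul]
        rw [integral_const_mul, integral_sub (hint k) (hint (k + 1)), resolventMoment_zero_right,
          resolventMoment_zero_right]

theorem integral_resolvent_sub_sq_mul_pos (c : ℝ) :
    0 < ∫ x, ((1 + γ * x)⁻¹ - c) ^ 2 * f x := by
  refine hf.integral_mul_pos (x₀ := (c⁻¹ - 1) / γ)
    (by have := continuousOn_resolvent (b := b) ha hγ; fun_prop)
    (fun x _ => sq_nonneg _) fun x hx hne => pow_two_pos_of_ne_zero fun heq => hne ?_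
  have hc : (1 + γ * x)⁻¹ = c := sub_eq_zero.mp heq
  rw [← hc, inv_inv]
  field_simp
  ring

theorem sq_resolventMoment_lt :
    resolventMoment f 1 0 γ ^ 2 < resolventMoment f 2 0 γ * resolventMoment f 0 0 γ := by
  simp only [resolventMoment_zero_right, pow_zero, pow_one, one_mul]
  have hG := continuousOn_resolvent (b := b) ha hγ
  exact sq_integral_mul_lt_of_forall_integral_sub_sq_mul_pos hf.integrable
    (hf.integrable_mul hG) (hf.integrable_mul (hG.pow 2)) hf.integral_pos
    (hf.integral_resolvent_sub_sq_mul_pos ha hγ)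

theorem resolventMoment_ratio_lt :
    resolventMoment f 2 1 γ / resolventMoment f 1 1 γ <
      resolventMoment f 2 0 γ / resolventMoment f 1 0 γ := by
  rw [div_lt_div_iff₀ (hf.resolventMoment_pos ha hγ 1 1) (hf.resolventMoment_pos ha hγ 1 0),
    hf.resolventMoment_succ_one ha hγ 1, hf.resolventMoment_succ_one ha hγ 0]
  have := hf.sq_resolventMoment_lt ha hγ
  have := inv_pos.2 hγ
  nlinarith

end PosDensityOn

theorem integrableOn_inv_sqrt_Ioc (b : ℝ) : IntegrableOn (fun x => (√x)⁻¹) (Ioc 0 b) := by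
  refine ((intervalIntegral.intervalIntegrable_rpow' (a := 0) (b := b)
    (r := -(1 / 2)) (by norm_num)).def'.mono_set Ioc_subset_uIoc).congr_fun
    (fun x hx => ?_) measurableSet_Ioc
  dsimp only
  rw [rpow_neg hx.1.le, ← sqrt_eq_rpow]

def mpLowerEdge (τ : ℝ) : ℝ := (1 - √τ) ^ 2

def mpUpperEdge (τ : ℝ) : ℝ := (1 + √τ) ^ 2

section MarchenkoPastur

variable {τ x : ℝ}

theorem mpLowerEdge_lt_mpUpperEdge (hτ : 0 < τ) : mpLowerEdge τ < mpUpperEdge τ := by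
  have := sqrt_pos.mpr hτ
  unfold mpLowerEdge mpUpperEdge
  nlinarith

theorem mpDensity_of_mem (hx : x ∈ Icc (mpLowerEdge τ) (mpUpperEdge τ)) :
    mpDensity τ x = √((mpUpperEdge τ - x) * (x - mpLowerEdge τ)) / (2 * π * τ * x) :=
  if_pos hx

theorem mpDensity_of_notMem (hx : x ∉ Icc (mpLowerEdge τ) (mpUpperEdge τ)) : mpDensity τ x = 0 :=
  if_neg hx

theorem support_mpDensity_subset : support (mpDensity τ) ⊆ Icc (mpLowerEdge τ) (mpUpperEdge τ) :=
  fun _ hx => by_contra fun h => hx (mpDensity_of_notMem h)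

theorem measurable_mpDensity : Measurable (mpDensity τ) :=
  Measurable.ite measurableSet_Icc (by fun_prop) measurable_const

theorem mpDensity_nonneg (hτ : 0 ≤ τ) (x : ℝ) : 0 ≤ mpDensity τ x := by
  by_cases hx : x ∈ Icc (mpLowerEdge τ) (mpUpperEdge τ)
  · have : 0 ≤ x := (sq_nonneg _).trans hx.1
    rw [mpDensity_of_mem hx]
    positivity
  · rw [mpDensity_of_notMem hx]

theorem mpDensity_pos (hτ : 0 < τ) (hx : x ∈ Ioo (mpLowerEdge τ) (mpUpperEdge τ)) :
    0 < mpDensity τ x := by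
  have : 0 < x := (sq_nonneg _).trans_lt hx.1
  have := sub_pos.2 hx.1
  have := sub_pos.2 hx.2
  rw [mpDensity_of_mem (Ioo_subset_Icc_self hx)]
  positivity

-- For `τ = 1` the lower edge is `0`, where `f_τ` blows up like `x^{-1/2}`.
theorem mpDensity_le_mul_inv_sqrt (hτ : 0 < τ) (hx : 0 < x) :
    mpDensity τ x ≤ √(mpUpperEdge τ) / (2 * π * τ) * (√x)⁻¹ := by
  by_cases hmem : x ∈ Icc (mpLowerEdge τ) (mpUpperEdge τ)
  · have ha : 0 ≤ mpLowerEdge τ := sq_nonneg _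
    have hprod : (mpUpperEdge τ - x) * (x - mpLowerEdge τ) ≤ mpUpperEdge τ * x := by
      nlinarith [mul_nonneg ha (sub_nonneg.2 hmem.2)]
    calc mpDensity τ x ≤ √(mpUpperEdge τ * x) / (2 * π * τ * x) := by
          rw [mpDensity_of_mem hmem]
          gcongr
      _ = √(mpUpperEdge τ) / (2 * π * τ) * (√x)⁻¹ := by
          rw [sqrt_mul (x := mpUpperEdge τ) (sq_nonneg _)]
          field_simp
          rw [sq_sqrt hx.le]
  · rw [mpDensity_of_notMem hmem]
    positivity

theorem integrable_mpDensity (hτ : 0 < τ) : Integrable (mpDensity τ) := by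
  have hsupp : support (mpDensity τ) ⊆ Icc 0 (mpUpperEdge τ) :=
    support_mpDensity_subset.trans (Icc_subset_Icc_left (sq_nonneg _))
  rw [← integrableOn_iff_integrable_of_support_subset hsupp,
    integrableOn_Icc_iff_integrableOn_Ioc]
  refine Integrable.mono' ((integrableOn_inv_sqrt_Ioc _).const_mul (√(mpUpperEdge τ) / (2 * π * τ)))
    measurable_mpDensity.aestronglyMeasurable
    ((ae_restrict_iff' measurableSet_Ioc).mpr (ae_of_all _ fun x hx => ?_))
  rw [norm_of_nonneg (mpDensity_nonneg hτ.le x)]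
  exact mpDensity_le_mul_inv_sqrt hτ hx.1

theorem posDensityOn_mpDensity (hτ : 0 < τ) :
    PosDensityOn (mpDensity τ) (mpLowerEdge τ) (mpUpperEdge τ) where
  lt := mpLowerEdge_lt_mpUpperEdge hτ
  integrable := integrable_mpDensity hτ
  nonneg := mpDensity_nonneg hτ.le
  support_subset := support_mpDensity_subset
  pos _ := mpDensity_pos hτ

end MarchenkoPastur

theorem statement17_general (τ : ℝ) (hτ : 0 < τ) :
    (∀ γ : ℝ, 0 < γ →
      hkl τ 2 1 γ / hkl τ 1 1 γ < hkl τ 2 0 γ / hkl τ 1 0 γ) ∧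
    (∀ γstar σε2 : ℝ, 0 < γstar → 0 < σε2 →
      -(σε2 / γstar) *
        (hkl τ 2 0 γstar / hkl τ 1 0 γstar - hkl τ 2 1 γstar / hkl τ 1 1 γstar) < 0) := by
  have hratio (γ : ℝ) (hγ : 0 < γ) : hkl τ 2 1 γ / hkl τ 1 1 γ < hkl τ 2 0 γ / hkl τ 1 0 γ :=
    (posDensityOn_mpDensity hτ).resolventMoment_ratio_lt (sq_nonneg _) hγ
  exact ⟨hratio, fun γstar σε2 hγ hσ =>
    mul_neg_of_neg_of_pos (neg_neg_of_pos (div_pos hσ hγ)) (sub_pos.2 (hratio γstar hγ))⟩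

/-- **Strict positivity of `f₂/g₂ − f₁/g₁` and negativity of the limiting
derivative** (STATEMENT 17). For `τ ∈ (0,1]` and `γ > 0`,
`∫(1+γx)⁻²f_τ / ∫(1+γx)⁻¹f_τ > ∫x(1+γx)⁻²f_τ / ∫x(1+γx)⁻¹f_τ`, i.e.
`f₂(γ)/g₂(γ) − f₁(γ)/g₁(γ) > 0`; consequently
`Δ'_∞(γ*) = −(σ²_{ε0}/γ*)(f₂(γ*)/g₂(γ*) − f₁(γ*)/g₁(γ*)) < 0` for all
`γ* > 0`, `σ²_{ε0} > 0`. -/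
theorem statement17 (τ : ℝ) (hτ : 0 < τ) (hτ1 : τ ≤ 1) :
    (∀ γ : ℝ, 0 < γ →
      hkl τ 2 1 γ / hkl τ 1 1 γ < hkl τ 2 0 γ / hkl τ 1 0 γ) ∧
    (∀ γstar σε2 : ℝ, 0 < γstar → 0 < σε2 →
      -(σε2 / γstar) *
        (hkl τ 2 0 γstar / hkl τ 1 0 γstar - hkl τ 2 1 γstar / hkl τ 1 1 γstar) < 0) :=
  statement17_general τ hτ

end
end
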